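/- arXiv:1010.4432 — 5 statements merged into one kernel-verified Lean document; each statement's English description precedes it below -/
import Mathlib

section
/- If f : [0,1] → ℝ is bounded and non-decreasing, then the function Uf defined by (Uf)(x) = ∑_{i=1}^∞ (x+1)/((x+i)(x+i+1)) · f(1/(x+i)) is non-increasing on [0,1]. -/
/-!
The weights `P_i(z) = T_z(i) - T_z(i+1)`, `T_z(i) = (z+1)/(z+i)`, form a probability distribution
on `i ≥ 1` with tails `T_z(i)`, and `T_x ≤ T_y` for `x ≤ y`: the distribution at `y` is
stochastically larger. Hence, summing by parts, `∑ P_i(y) g_i ≤ ∑ P_i(x) g_i` for the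
non-increasing sequence `g_i = f(1/(y+i))`, and the right side is at most `Uf(x)` because
`1/(y+i) ≤ 1/(x+i)` and `f` is non-decreasing.
-/

open Filter Finset Topology

section SummationByParts

variable {a b g : ℕ → ℝ} {C : ℝ}

theorem Antitone.summable_sub_succ_mul {l : ℝ} (ha : Antitone a) (hal : Tendsto a atTop (𝓝 l))
    (hg : ∀ i, |g i| ≤ C) : Summable fun i => (a i - a (i + 1)) * g i := by
  have hda : ∀ i, 0 ≤ a i - a (i + 1) := fun i => sub_nonneg.2 (ha i.le_succ)
  have htel : HasSum (fun i => a i - a (i + 1)) (a 0 - l) := by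
    rw [hasSum_iff_tendsto_nat_of_nonneg hda]
    simp_rw [sum_range_sub']
    exact hal.const_sub _
  refine (htel.summable.mul_right C).of_norm_bounded fun i => ?_
  rw [Real.norm_eq_abs, abs_mul, abs_of_nonneg (hda i)]
  exact mul_le_mul_of_nonneg_left (hg i) (hda i)

theorem sum_range_sub_succ_mul_le_of_antitone (h0 : a 0 = b 0) (hab : ∀ i, a i ≤ b i)
    (hg : Antitone g) (n : ℕ) :
    ∑ i ∈ range n, (b i - b (i + 1)) * g i ≤
      ∑ i ∈ range n, (a i - a (i + 1)) * g i + (a n - b n) * g n := by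
  induction n with
  | zero => simp [h0]
  | succ n ih =>
    have hstep : 0 ≤ (b (n + 1) - a (n + 1)) * (g n - g (n + 1)) :=
      mul_nonneg (sub_nonneg.2 (hab _)) (sub_nonneg.2 (hg n.le_succ))
    rw [sum_range_succ, sum_range_succ]
    linarith

theorem tsum_sub_succ_mul_le_of_antitone {l : ℝ} (h0 : a 0 = b 0) (hab : ∀ i, a i ≤ b i)
    (hal : Tendsto a atTop (𝓝 l)) (hbl : Tendsto b atTop (𝓝 l))
    (hg : Antitone g) (hgC : ∀ i, |g i| ≤ C)
    (hsa : Summable fun i => (a i - a (i + 1)) * g i)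
    (hsb : Summable fun i => (b i - b (i + 1)) * g i) :
    ∑' i, (b i - b (i + 1)) * g i ≤ ∑' i, (a i - a (i + 1)) * g i := by
  have hboundary : Tendsto (fun n => (a n - b n) * g n) atTop (𝓝 0) := by
    refine (by simpa using hal.sub hbl : Tendsto (fun n => a n - b n) atTop (𝓝 0))
      |>.zero_mul_isBoundedUnder_le ⟨C, eventually_map.2 (Eventually.of_forall hgC)⟩
  refine le_of_tendsto_of_tendsto' hsb.hasSum.tendsto_sum_nat ?_
    (sum_range_sub_succ_mul_le_of_antitone h0 hab hg)
  simpa using hsa.hasSum.tendsto_sum_nat.add hboundary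

end SummationByParts

/-- `gaussTail z i = ∑_{j ≥ i} P_{j+1}(z)`, the tail mass of the weights of `U` at `z`. -/
noncomputable def gaussTail (z : ℝ) (i : ℕ) : ℝ := (z + 1) / (z + (i + 1))

section GaussTail

variable {x y z : ℝ}

theorem gaussTail_zero (hz : 0 ≤ z) : gaussTail z 0 = 1 := by
  simp [gaussTail, div_self (by positivity : z + 1 ≠ 0)]

theorem gaussTail_sub_succ (hz : 0 ≤ z) (i : ℕ) :
    gaussTail z i - gaussTail z (i + 1) = (z + 1) / ((z + (i + 1)) * (z + (i + 1) + 1)) := by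
  simp only [gaussTail]
  push_cast
  field_simp
  ring

theorem antitone_gaussTail (hz : 0 ≤ z) : Antitone (gaussTail z) := fun i j hij => by
  simp only [gaussTail]
  gcongr

theorem tendsto_gaussTail (z : ℝ) : Tendsto (gaussTail z) atTop (𝓝 0) :=
  tendsto_const_nhds.div_atTop <|
    tendsto_atTop_add_const_left _ z <|
      tendsto_atTop_add_const_right _ 1 tendsto_natCast_atTop_atTop

theorem gaussTail_le_gaussTail (hx : 0 ≤ x) (hxy : x ≤ y) (i : ℕ) :
    gaussTail x i ≤ gaussTail y i := by
  have hy : 0 ≤ y := hx.trans hxy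
  simp only [gaussTail]
  rw [div_le_div_iff₀ (by positivity) (by positivity)]
  nlinarith [i.cast_nonneg (α := ℝ)]

theorem one_div_add_succ_mem_Icc (hz : 0 ≤ z) (i : ℕ) :
    1 / (z + (i + 1)) ∈ Set.Icc (0 : ℝ) 1 :=
  have hpos : 0 < z + (i + 1) := by positivity
  ⟨by positivity, (div_le_one hpos).2 (by linarith [i.cast_nonneg (α := ℝ)])⟩

theorem antitone_one_div_add_succ (hz : 0 ≤ z) : Antitone fun i : ℕ => 1 / (z + (i + 1)) :=
  fun i j hij => by
    dsimp only
    gcongr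

end GaussTail

theorem perron_frobenius_antitone (f : ℝ → ℝ)
    (hbdd : ∃ C : ℝ, ∀ x ∈ Set.Icc (0:ℝ) 1, |f x| ≤ C)
    (hmono : MonotoneOn f (Set.Icc (0:ℝ) 1)) :
    AntitoneOn
      (fun x : ℝ => ∑' i : ℕ,
        (x + 1) / ((x + (i + 1)) * (x + (i + 1) + 1)) * f (1 / (x + (i + 1))))
      (Set.Icc 0 1) := by
  intro x hx y hy hxy
  obtain ⟨C, hC⟩ := hbdd
  set g : ℕ → ℝ := fun i => f (1 / (y + (i + 1)))
  have hg : Antitone g := fun i j hij =>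
    hmono (one_div_add_succ_mem_Icc hy.1 j) (one_div_add_succ_mem_Icc hy.1 i)
      (antitone_one_div_add_succ hy.1 hij)
  have hgC : ∀ i, |g i| ≤ C := fun i => hC _ (one_div_add_succ_mem_Icc hy.1 i)
  have hfxC : ∀ i : ℕ, |f (1 / (x + (i + 1)))| ≤ C :=
    fun i => hC _ (one_div_add_succ_mem_Icc hx.1 i)
  simp only [← gaussTail_sub_succ hx.1, ← gaussTail_sub_succ hy.1]
  calc ∑' i, (gaussTail y i - gaussTail y (i + 1)) * g i
      ≤ ∑' i, (gaussTail x i - gaussTail x (i + 1)) * g i :=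
        tsum_sub_succ_mul_le_of_antitone (by rw [gaussTail_zero hx.1, gaussTail_zero hy.1])
          (gaussTail_le_gaussTail hx.1 hxy) (tendsto_gaussTail x) (tendsto_gaussTail y) hg hgC
          ((antitone_gaussTail hx.1).summable_sub_succ_mul (tendsto_gaussTail x) hgC)
          ((antitone_gaussTail hy.1).summable_sub_succ_mul (tendsto_gaussTail y) hgC)
    _ ≤ ∑' i, (gaussTail x i - gaussTail x (i + 1)) * f (1 / (x + (i + 1))) := by
      refine Summable.tsum_le_tsum (fun i => ?_)
        ((antitone_gaussTail hx.1).summable_sub_succ_mul (tendsto_gaussTail x) hgC)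
        ((antitone_gaussTail hx.1).summable_sub_succ_mul (tendsto_gaussTail x) hfxC)
      refine mul_le_mul_of_nonneg_left ?_ (sub_nonneg.2 (antitone_gaussTail hx.1 i.le_succ))
      exact hmono (one_div_add_succ_mem_Icc hy.1 i) (one_div_add_succ_mem_Icc hx.1 i) <| by
        gcongr
        linarith [hx.1, i.cast_nonneg (α := ℝ)]
end

section
/- The function h(x) = ∑_{i=1}^∞ (x+1)/((x+i)^3 (x+i+1)) is non-increasing on [0,1], and consequently h(x) ≤ h(0) = ∑_{i=1}^∞ 1/(i^3(i+1)) for all x ∈ [0,1]. -/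
/-! The weights `P_n(x) = (x + 1) / ((x + n) (x + n + 1))` telescope to `1`, so
`h(x) - 1 = ∑ P_n(x) ((x + n)⁻² - 1) = ∑ (x + 1) (1 - (x + n)) / (x + n) ^ 3`.
The terms of `h` itself are not monotone for large `n`, but each of these corrected terms is
antitone on `[0, 1]`: its derivative is `(x ^ 2 - (n ^ 2 - 3 n + 3)) / (x + n) ^ 4 ≤ 0`. -/

open Filter Topology Set

theorem hasSum_gauss_weights {x : ℝ} (hx : -1 < x) :
    HasSum (fun n : ℕ => (x + 1) / ((x + (n + 1)) * (x + (n + 1) + 1))) 1 := by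
  have hpos (n : ℕ) : 0 < x + (n + 1) := by have := n.cast_nonneg (α := ℝ); linarith
  set d : ℕ → ℝ := fun n => (x + 1) / (x + (n + 1))
  have htelescope (n : ℕ) : (x + 1) / ((x + (n + 1)) * (x + (n + 1) + 1)) = d n - d (n + 1) := by
    have := hpos n
    have : x + ((n : ℝ) + 1 + 1) ≠ 0 := by linarith
    simp only [d]
    push_cast
    field_simp
    ring
  have hd : Tendsto d atTop (𝓝 0) :=
    tendsto_const_nhds.div_atTop <| tendsto_atTop_add_const_left _ x <|
      tendsto_atTop_add_const_right _ 1 tendsto_natCast_atTop_atTop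
  have hnonneg (n : ℕ) : 0 ≤ (x + 1) / ((x + (n + 1)) * (x + (n + 1) + 1)) :=
    div_nonneg (by linarith) (by have := hpos n; positivity)
  rw [hasSum_iff_tendsto_nat_of_nonneg hnonneg]
  simp only [htelescope, Finset.sum_range_sub']
  have hd0 : d 0 = 1 := by simp [d, (by linarith : x + 1 ≠ 0)]
  simpa [hd0] using hd.const_sub 1

theorem gauss_term_le_weight {x : ℝ} (hx : 0 ≤ x) (n : ℕ) :
    (x + 1) / ((x + (n + 1)) ^ 3 * (x + (n + 1) + 1)) ≤
      (x + 1) / ((x + (n + 1)) * (x + (n + 1) + 1)) := by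
  have hu : 1 ≤ x + (n + 1) := by have := n.cast_nonneg (α := ℝ); linarith
  gcongr
  exact le_self_pow₀ hu (by norm_num)

theorem gauss_term_sub_weight {x : ℝ} (hx : -1 < x) (n : ℕ) :
    (x + 1) / ((x + (n + 1)) ^ 3 * (x + (n + 1) + 1)) -
        (x + 1) / ((x + (n + 1)) * (x + (n + 1) + 1)) =
      (x + 1) * (1 - (x + (n + 1))) / (x + (n + 1)) ^ 3 := by
  have : 0 < x + (n + 1) := by have := n.cast_nonneg (α := ℝ); linarith
  have : 0 < x + (n + 1) + 1 := by linarith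
  field_simp
  ring

theorem hasDerivAt_gauss_correction {a x : ℝ} (hxa : x + a ≠ 0) :
    HasDerivAt (fun x => (x + 1) * (1 - (x + a)) / (x + a) ^ 3)
      ((x ^ 2 - (a ^ 2 - 3 * a + 3)) / (x + a) ^ 4) x := by
  have hnum : HasDerivAt (fun x => (x + 1) * (1 - (x + a))) (1 * (1 - (x + a)) + (x + 1) * -1) x :=
    ((hasDerivAt_id x).add_const 1).mul (((hasDerivAt_id x).add_const a).const_sub 1)
  refine (hnum.div (((hasDerivAt_id' x).add_const a).fun_pow 3) (pow_ne_zero 3 hxa)).congr_deriv ?_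
  field_simp
  ring

theorem antitoneOn_gauss_correction (n : ℕ) :
    AntitoneOn (fun x : ℝ => (x + 1) * (1 - (x + (n + 1))) / (x + (n + 1)) ^ 3) (Icc 0 1) := by
  have hderiv (x : ℝ) (hx : 0 ≤ x) := hasDerivAt_gauss_correction (a := n + 1) (x := x)
    (by have := n.cast_nonneg (α := ℝ); positivity)
  refine antitoneOn_of_hasDerivWithinAt_nonpos (convex_Icc 0 1)
    (fun x hx => (hderiv x hx.1).continuousAt.continuousWithinAt)
    (fun x hx => (hderiv x (interior_subset hx).1).hasDerivWithinAt) fun x hx => ?_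
  rw [interior_Icc] at hx
  -- With `a = n + 1`, `a ^ 2 - 3 * a + 3 = n ^ 2 - n + 1 ≥ 1 ≥ x ^ 2`.
  have hn : (n : ℝ) ≤ n ^ 2 := by exact_mod_cast Nat.le_self_pow two_ne_zero n
  apply div_nonpos_of_nonpos_of_nonneg _ (by positivity)
  nlinarith [hx.1, hx.2]

theorem hasSum_gauss_correction {x : ℝ} (hx : 0 ≤ x) :
    HasSum (fun n : ℕ => (x + 1) * (1 - (x + (n + 1))) / (x + (n + 1)) ^ 3)
      ((∑' n : ℕ, (x + 1) / ((x + (n + 1)) ^ 3 * (x + (n + 1) + 1))) - 1) := by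
  have hweights := hasSum_gauss_weights (by linarith : -1 < x)
  have hsummable : Summable fun n : ℕ => (x + 1) / ((x + (n + 1)) ^ 3 * (x + (n + 1) + 1)) :=
    hweights.summable.of_nonneg_of_le (fun _ => by positivity) (gauss_term_le_weight hx)
  simpa only [gauss_term_sub_weight (by linarith : -1 < x)] using hsummable.hasSum.sub hweights

theorem h_antitone_and_bounded :
    AntitoneOn
      (fun x : ℝ => ∑' i : ℕ, (x + 1) / ((x + (i + 1)) ^ 3 * (x + (i + 1) + 1)))
      (Set.Icc 0 1) ∧
    ∀ x ∈ Set.Icc (0:ℝ) 1,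
      (∑' i : ℕ, (x + 1) / ((x + (i + 1)) ^ 3 * (x + (i + 1) + 1))) ≤
        ∑' i : ℕ, 1 / (((i : ℝ) + 1) ^ 3 * ((i + 1) + 1)) := by
  have hantitone : AntitoneOn
      (fun x : ℝ => ∑' i : ℕ, (x + 1) / ((x + (i + 1)) ^ 3 * (x + (i + 1) + 1))) (Icc 0 1) :=
    fun x hx y hy hxy => by
      linarith [hasSum_le (fun n => antitoneOn_gauss_correction n hx hy hxy)
        (hasSum_gauss_correction hy.1) (hasSum_gauss_correction hx.1)]
  refine ⟨hantitone, fun x hx => ?_⟩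
  simpa using hantitone ⟨le_rfl, zero_le_one⟩ hx hx.1
end

section
/- Define F_n(x) = λ({ξ ∈ [0,1) : τ^n(ξ) ≤ x}), where λ is Lebesgue measure and τ is the Gauss map. Then for all n ≥ 0 and x ∈ [0,1], F_{n+1}(x) = ∑_{i=1}^∞ (F_n(1/i) - F_n(1/(x+i))). -/
/-- The Gauss (continued fraction) map. -/
noncomputable def gaussMap (x : ℝ) : ℝ := if x = 0 then 0 else 1 / x - ⌊1 / x⌋

/-- `F n x` is the Lebesgue measure of the set of `ξ ∈ [0,1)` with `τⁿ ξ ≤ x`. -/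
noncomputable def F (n : ℕ) (x : ℝ) : ℝ :=
  (MeasureTheory.volume {ξ ∈ Set.Ico (0:ℝ) 1 | gaussMap^[n] ξ ≤ x}).toReal

/-!
For `η ∈ (0,1)` we have `τ η ≤ x` exactly when `1/η ∈ [k+1, x+k+1]` for some `k ∈ ℕ`, i.e.
`η ∈ [1/(x+k+1), 1/(k+1)]`. Hence, up to the countable set formed by `0` and the left endpoints,
`{τ ≤ x} ∩ [0,1)` is the disjoint union of the intervals `(1/(x+k+1), 1/(k+1)]` (disjoint because
`x ≤ 1`). The law of `τⁿ` under Lebesgue measure on `[0,1)` has no atoms, since `τ` and hence `τⁿ`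
have countable fibres; its mass on `{τ ≤ x}` is `F (n+1) x`, and its mass on the `k`-th interval is
`F n (1/(k+1)) - F n (1/(x+k+1))`.
-/

open MeasureTheory Set Filter

lemma Set.Countable.preimage_of_countable_fibers {α β : Type*} {f : α → β}
    (hf : ∀ y, (f ⁻¹' {y}).Countable) {s : Set β} (hs : s.Countable) : (f ⁻¹' s).Countable := by
  rw [← biUnion_preimage_singleton]
  exact hs.biUnion fun y _ => hf y

lemma Function.countable_preimage_iterate {α : Type*} {f : α → α}
    (hf : ∀ y, (f ⁻¹' {y}).Countable) (n : ℕ) {s : Set α} (hs : s.Countable) :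
    (f^[n] ⁻¹' s).Countable := by
  induction n with
  | zero => exact hs
  | succ n ih =>
    rw [Function.iterate_succ, preimage_comp]
    exact ih.preimage_of_countable_fibers hf

lemma Int.fract_le_iff_exists_nat {t x : ℝ} (ht : 1 ≤ t) :
    Int.fract t ≤ x ↔ ∃ k : ℕ, t ∈ Icc ((k : ℝ) + 1) (x + (k + 1)) := by
  constructor
  · intro h
    obtain ⟨k, hk⟩ := Int.eq_ofNat_of_zero_le (a := ⌊t⌋ - 1) (by
      have : (1 : ℤ) ≤ ⌊t⌋ := Int.le_floor.2 (by exact_mod_cast ht)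
      omega)
    have hfloor : (⌊t⌋ : ℝ) = k + 1 := by
      rw [show ⌊t⌋ = k + 1 by omega]; push_cast; ring
    refine ⟨k, hfloor ▸ Int.floor_le t, ?_⟩
    rw [← hfloor]
    linarith [Int.self_sub_floor t]
  · rintro ⟨k, hlo, hhi⟩
    have : ((k : ℤ) + 1 : ℤ) ≤ ⌊t⌋ := Int.le_floor.2 (by exact_mod_cast hlo)
    have : (k : ℝ) + 1 ≤ ⌊t⌋ := by exact_mod_cast this
    rw [Int.fract]; linarith

lemma measureReal_Ioc_eq_sub (μ : Measure ℝ) [IsFiniteMeasure μ] {a b : ℝ} (hab : a ≤ b) :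
    μ.real (Ioc a b) = μ.real (Iic b) - μ.real (Iic a) := by
  rw [← measureReal_sdiff (Iic_subset_Iic.2 hab) measurableSet_Iic, Iic_sdiff_Iic]

lemma gaussMap_eq_fract_inv (x : ℝ) : gaussMap x = Int.fract x⁻¹ := by
  by_cases hx : x = 0
  · simp [gaussMap, hx]
  · rw [gaussMap, if_neg hx, Int.fract, one_div]

lemma gaussMap_mem_Ico (x : ℝ) : gaussMap x ∈ Ico 0 1 := by
  rw [gaussMap_eq_fract_inv]
  exact ⟨Int.fract_nonneg _, Int.fract_lt_one _⟩

lemma measurable_gaussMap : Measurable gaussMap := by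
  rw [funext gaussMap_eq_fract_inv]
  exact measurable_fract.comp measurable_inv

lemma countable_preimage_gaussMap_singleton (c : ℝ) : (gaussMap ⁻¹' {c}).Countable := by
  refine ((countable_range fun k : ℤ => (c + k)⁻¹).insert 0).mono
    fun ξ (hξ : gaussMap ξ = c) => ?_
  by_cases h0 : ξ = 0
  · exact Or.inl h0
  · refine Or.inr ⟨⌊ξ⁻¹⌋, ?_⟩
    rw [gaussMap_eq_fract_inv, Int.fract] at hξ
    simp [← hξ]

lemma gaussMap_le_iff {x η : ℝ} (hx : 0 ≤ x) (hη : η ∈ Ioo 0 1) :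
    gaussMap η ≤ x ↔ ∃ k : ℕ, η ∈ Icc (x + (k + 1))⁻¹ ((k : ℝ) + 1)⁻¹ := by
  rw [gaussMap_eq_fract_inv, Int.fract_le_iff_exists_nat (one_le_inv₀ hη.1 |>.2 hη.2.le)]
  refine exists_congr fun k => and_comm.trans (and_congr ?_ ?_)
  · exact inv_le_comm₀ hη.1 (by positivity)
  · exact le_inv_comm₀ (by positivity) hη.1

lemma pairwise_disjoint_Ioc_inv {x : ℝ} (hx : x ∈ Icc 0 1) :
    Pairwise (Function.onFun Disjoint fun k : ℕ => Ioc (x + (k + 1))⁻¹ ((k : ℝ) + 1)⁻¹) := by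
  refine (pairwise_disjoint_on _).2 fun k l hkl => (Ioc_disjoint_Ioc_of_le ?_).symm
  have : x + (k + 1) ≤ (l : ℝ) + 1 := by
    have : (k : ℝ) + 1 ≤ l := by exact_mod_cast hkl
    linarith [hx.2]
  exact inv_anti₀ (by linarith [hx.1]) this

lemma gaussMap_preimage_Iic_ae_eq {ν : Measure ℝ} [NullSingletonClass ν]
    (hν : ∀ᵐ η ∂ν, η ∈ Ico 0 1) {x : ℝ} (hx : 0 ≤ x) :
    gaussMap ⁻¹' Iic x =ᵐ[ν] ⋃ k : ℕ, Ioc (x + (k + 1))⁻¹ ((k : ℝ) + 1)⁻¹ := by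
  have hC : (insert 0 (range fun k : ℕ => (x + (k + 1))⁻¹)).Countable :=
    (countable_range _).insert 0
  refine eventuallyEq_set.2 ?_
  filter_upwards [hν, hC.ae_notMem ν] with η hη hηC
  rw [mem_insert_iff, not_or] at hηC
  have hη' : η ∈ Ioo 0 1 := ⟨lt_of_le_of_ne hη.1 (Ne.symm hηC.1), hη.2⟩
  rw [mem_preimage, mem_Iic, gaussMap_le_iff hx hη', mem_iUnion]
  exact exists_congr fun k =>
    ⟨fun h => ⟨lt_of_le_of_ne h.1 fun e => hηC.2 ⟨k, e⟩, h.2⟩, fun h => Ioc_subset_Icc_self h⟩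

theorem measureReal_gaussMap_preimage_Iic (ν : Measure ℝ) [IsFiniteMeasure ν]
    [NullSingletonClass ν] (hν : ∀ᵐ η ∂ν, η ∈ Ico 0 1) {x : ℝ} (hx : x ∈ Icc 0 1) :
    ν.real (gaussMap ⁻¹' Iic x) =
      ∑' k : ℕ, (ν.real (Iic ((k : ℝ) + 1)⁻¹) - ν.real (Iic (x + (k + 1))⁻¹)) := by
  rw [measureReal_congr (gaussMap_preimage_Iic_ae_eq hν hx.1), measureReal_def,
    measure_iUnion (pairwise_disjoint_Ioc_inv hx) fun _ => measurableSet_Ioc,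
    ENNReal.tsum_toReal_eq fun _ => measure_ne_top _ _]
  exact tsum_congr fun k =>
    measureReal_Ioc_eq_sub ν (inv_anti₀ (by positivity) (by linarith [hx.1]))

noncomputable def gaussIterateLaw (n : ℕ) : Measure ℝ :=
  (volume.restrict (Ico 0 1)).map gaussMap^[n]

instance (n : ℕ) : IsFiniteMeasure (gaussIterateLaw n) := by
  unfold gaussIterateLaw; infer_instance

instance (n : ℕ) : NullSingletonClass (gaussIterateLaw n) where
  measure_singleton c := by
    rw [gaussIterateLaw, Measure.map_apply (measurable_gaussMap.iterate n)
      (measurableSet_singleton c)]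
    exact (Function.countable_preimage_iterate countable_preimage_gaussMap_singleton n
      (countable_singleton c)).measure_zero _

lemma ae_mem_Ico_gaussIterateLaw (n : ℕ) : ∀ᵐ η ∂gaussIterateLaw n, η ∈ Ico 0 1 :=
  (ae_map_iff (measurable_gaussMap.iterate n).aemeasurable measurableSet_Ico).2 <|
    ae_restrict_of_forall_mem measurableSet_Ico <|
      MapsTo.iterate (fun x _ => gaussMap_mem_Ico x) n

lemma measureReal_gaussIterateLaw (n : ℕ) {s : Set ℝ} (hs : MeasurableSet s) :
    (gaussIterateLaw n).real s = volume.real {ξ ∈ Ico 0 1 | gaussMap^[n] ξ ∈ s} := by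
  rw [gaussIterateLaw, map_measureReal_apply (measurable_gaussMap.iterate n) hs,
    measureReal_restrict_apply (measurable_gaussMap.iterate n hs), inter_comm]
  rfl

lemma F_eq_measureReal (n : ℕ) (y : ℝ) : F n y = (gaussIterateLaw n).real (Iic y) :=
  (measureReal_gaussIterateLaw n measurableSet_Iic).symm

lemma F_succ_eq_measureReal (n : ℕ) (x : ℝ) :
    F (n + 1) x = (gaussIterateLaw n).real (gaussMap ⁻¹' Iic x) := by
  rw [measureReal_gaussIterateLaw n (measurable_gaussMap measurableSet_Iic)]
  simp only [F, Function.iterate_succ_apply']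
  rfl

theorem gauss_kuzmin_equation :
    ∀ n : ℕ, ∀ x ∈ Set.Icc (0:ℝ) 1,
      F (n + 1) x = ∑' i : ℕ, (F n (1 / (i + 1)) - F n (1 / (x + (i + 1)))) := by
  intro n x hx
  rw [F_succ_eq_measureReal,
    measureReal_gaussMap_preimage_Iic _ (ae_mem_Ico_gaussIterateLaw n) hx]
  simp only [F_eq_measureReal, one_div]
end

section
/- If f : [0,1] → ℝ is continuously differentiable and g(x) = ∑_{i=1}^∞ (f(1/i) - f(1/(x+i))), then g is differentiable on [0,1] with g'(x) = ∑_{i=1}^∞ (1/(x+i)^2) f'(1/(x+i)). -/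
/-!
Extend `f` from `[0, 1]` to `F : ℝ → ℝ` by integrating the derivative clamped to `[0, 1]`;
then `F'` is continuous and bounded by some `C`. The `i`-th term
`F (1 / (i + 1)) - F (1 / (y + i + 1))` has derivative `F' (1 / (y + i + 1)) / (y + i + 1) ^ 2`,
bounded by `C / (i + 1 + c) ^ 2` for `y > c > -1`, so the series (which vanishes at `y = 0`)
may be differentiated termwise. For `y ∈ [0, 1]` every argument `1 / (y + i + 1)` lies in
`[0, 1]`, where `F = f` and `F' = derivWithin f [0, 1]`.
-/

open Set

section

variable {E : Type*} [NormedAddCommGroup E] [NormedSpace ℝ E]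

theorem ContDiffOn.exists_hasDerivAt_extension_Icc [CompleteSpace E] {f : ℝ → E} {a b : ℝ}
    (hab : a < b) (hf : ContDiffOn ℝ 1 f (Icc a b)) :
    ∃ F F' : ℝ → E, (∀ z, HasDerivAt F (F' z) z) ∧ (∃ C, ∀ z, ‖F' z‖ ≤ C) ∧
      EqOn F f (Icc a b) ∧ EqOn F' (derivWithin f (Icc a b)) (Icc a b) := by
  have hf' : ContinuousOn (derivWithin f (Icc a b)) (Icc a b) :=
    hf.continuousOn_derivWithin (uniqueDiffOn_Icc hab) le_rfl
  set F' : ℝ → E := fun z => derivWithin f (Icc a b) (projIcc a b hab.le z)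
  have hF'_cont : Continuous F' :=
    hf'.comp_continuous (continuous_subtype_val.comp continuous_projIcc) fun z =>
      (projIcc a b hab.le z).2
  have hF'_eq : EqOn F' (derivWithin f (Icc a b)) (Icc a b) := fun z hz => by
    simp only [F', projIcc_of_mem hab.le hz]
  refine ⟨fun z => f a + ∫ t in a..z, F' t, F', fun z => ?_, ?_, fun z hz => ?_, hF'_eq⟩
  · exact (hF'_cont.integral_hasStrictDerivAt a z).hasDerivAt.const_add (f a)
  · obtain ⟨C, hC⟩ := isCompact_Icc.exists_bound_of_continuousOn hf'
    exact ⟨C, fun z => hC _ (projIcc a b hab.le z).2⟩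
  · have hsub : Icc a z ⊆ Icc a b := Icc_subset_Icc_right hz.2
    have hFTC : ∫ t in a..z, F' t = f z - f a := by
      refine intervalIntegral.integral_eq_sub_of_hasDerivAt_of_le hz.1 (hf.continuousOn.mono hsub)
        (fun t ht => ?_) (hF'_cont.intervalIntegrable a z)
      have ht' : t ∈ Ioo a b := ⟨ht.1, ht.2.trans_le hz.2⟩
      rw [hF'_eq (Ioo_subset_Icc_self ht')]
      exact (hf.differentiableOn one_ne_zero t (Ioo_subset_Icc_self ht')).hasDerivWithinAt
        |>.hasDerivAt (Icc_mem_nhds ht'.1 ht'.2)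
    simp only [hFTC, add_sub_cancel]

theorem HasDerivAt.comp_one_div_add {F : ℝ → E} {F' : E} {y a : ℝ} (hya : y + a ≠ 0)
    (hF : HasDerivAt F F' (1 / (y + a))) :
    HasDerivAt (fun z => F (1 / (z + a))) (-(1 / (y + a) ^ 2) • F') y := by
  have hinv : HasDerivAt (fun z => 1 / (z + a)) (-(1 / (y + a) ^ 2)) y := by
    simpa [one_div, neg_div, Pi.inv_def] using ((hasDerivAt_id y).add_const a).inv hya
  exact hF.scomp y hinv

noncomputable def gaussKuzminSeries (F : ℝ → E) (y : ℝ) : E :=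
  ∑' i : ℕ, (F (1 / (i + 1)) - F (1 / (y + (i + 1))))

theorem hasDerivAt_gaussKuzminSeries [CompleteSpace E] {F F' : ℝ → E} {C : ℝ}
    (hF : ∀ z, HasDerivAt F (F' z) z) (hC : ∀ z, ‖F' z‖ ≤ C) {x : ℝ} (hx : -1 < x) :
    HasDerivAt (gaussKuzminSeries F)
      (∑' i : ℕ, (1 / (x + (i + 1)) ^ 2) • F' (1 / (x + (i + 1)))) x := by
  obtain ⟨c, hc, hcx0⟩ := exists_between (lt_min hx neg_one_lt_zero)
  have hshift : ∀ i : ℕ, 0 < (i : ℝ) + (1 + c) := fun i => by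
    linarith [(i.cast_nonneg : (0 : ℝ) ≤ i)]
  have hsummable : Summable fun i : ℕ => C * (1 / ((i : ℝ) + (1 + c)) ^ 2) := by
    refine Summable.mul_left C ?_
    simpa [Real.rpow_two, sq_abs] using
      (Real.summable_one_div_nat_add_rpow (1 + c) 2).2 one_lt_two
  refine hasDerivAt_tsum_of_isPreconnected
    (g := fun (i : ℕ) y => F (1 / (i + 1)) - F (1 / (y + (i + 1))))
    (g' := fun (i : ℕ) y => (1 / (y + (i + 1)) ^ 2) • F' (1 / (y + (i + 1))))
    hsummable isOpen_Ioi isPreconnected_Ioi (fun i y hy => ?_) (fun i y hy => ?_)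
    (lt_of_lt_of_le hcx0 (min_le_right x 0)) (by simp) (lt_of_lt_of_le hcx0 (min_le_left x 0))
  all_goals have hpos : 0 < y + (i + 1) := by linarith [hshift i, show c < y from hy]
  · simpa only [neg_smul, neg_neg] using
      ((hF _).comp_one_div_add hpos.ne').const_sub (F (1 / (i + 1)))
  · calc ‖(1 / (y + (i + 1)) ^ 2) • F' (1 / (y + (i + 1)))‖
          = ‖F' (1 / (y + (i + 1)))‖ * (1 / (y + (i + 1)) ^ 2) := by
            rw [norm_smul, mul_comm, Real.norm_of_nonneg (by positivity)]
      _ ≤ C * (1 / ((i : ℝ) + (1 + c)) ^ 2) := by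
            have hle : (i : ℝ) + (1 + c) ≤ y + (i + 1) := by linarith [show c < y from hy]
            exact mul_le_mul (hC _) (one_div_le_one_div_of_le (pow_pos (hshift i) 2)
              (pow_le_pow_left₀ (hshift i).le hle 2)) (by positivity)
              ((norm_nonneg _).trans (hC 0))

end

theorem one_div_mem_Icc_zero_one {t : ℝ} (ht : 1 ≤ t) : 1 / t ∈ Icc (0 : ℝ) 1 :=
  ⟨by positivity, (div_le_one (zero_lt_one.trans_le ht)).2 ht⟩

theorem derivative_of_gauss_kuzmin_series (f : ℝ → ℝ)
    (hf : ContDiffOn ℝ 1 f (Set.Icc 0 1)) :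
    ∀ x ∈ Set.Icc (0:ℝ) 1,
      HasDerivWithinAt
        (fun y : ℝ => ∑' i : ℕ, (f (1 / (i + 1)) - f (1 / (y + (i + 1)))))
        (∑' i : ℕ, (1 / (x + (i + 1)) ^ 2) *
          derivWithin f (Set.Icc 0 1) (1 / (x + (i + 1))))
        (Set.Icc 0 1) x := by
  obtain ⟨F, F', hF, ⟨C, hC⟩, hFf, hF'f⟩ := hf.exists_hasDerivAt_extension_Icc zero_lt_one
  have hmem : ∀ y : ℝ, 0 ≤ y → ∀ i : ℕ, 1 / (y + (i + 1)) ∈ Icc (0 : ℝ) 1 := fun y hy i =>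
    one_div_mem_Icc_zero_one (by linarith [(i.cast_nonneg : (0 : ℝ) ≤ i)])
  have hseries : EqOn (fun y : ℝ => ∑' i : ℕ, (f (1 / (i + 1)) - f (1 / (y + (i + 1)))))
      (gaussKuzminSeries F) (Icc 0 1) := fun y hy => tsum_congr fun i => by
    rw [← hFf (by simpa using hmem 0 le_rfl i), ← hFf (hmem y hy.1 i)]
  intro x hx
  have hderiv : ∑' i : ℕ, (1 / (x + (i + 1)) ^ 2) * derivWithin f (Icc 0 1) (1 / (x + (i + 1)))
      = ∑' i : ℕ, (1 / (x + (i + 1)) ^ 2) • F' (1 / (x + (i + 1))) :=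
    tsum_congr fun i => by rw [← hF'f (hmem x hx.1 i), smul_eq_mul]
  rw [hderiv]
  exact ((hasDerivAt_gaussKuzminSeries hF hC (by linarith [hx.1])).hasDerivWithinAt).congr
    hseries (hseries hx)
end

section
/- Let g : [0,1] → ℝ be continuously differentiable and define (Ug)(x) = ∑_{i=1}^∞ P_i(x) g(1/(x+i)) with P_i(x) = (x+1)/((x+i)(x+i+1)). Then Ug is differentiable and for all x ∈ [0,1], (Ug)'(x) = -∑_{i=1}^∞ (i/(x+i+1)^2)(g(1/(x+i)) - g(1/(x+i+1))) - ∑_{i=1}^∞ (P_i(x)/(x+i)^2) g'(1/(x+i)). -/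
/-!
Write `P_{n+1}(y) = (n+1)/(y+n+2) - n/(y+n+1)`. On `[0,1]` the summands `P_{n+1}(y) g(1/(y+n+1))`
and their derivatives are `O(1/n²)` uniformly, so the series may be differentiated termwise (the
mean value theorem bounds the tails uniformly). The resulting series `∑ P'_{n+1}(x) g(1/(x+n+1))`
is then rearranged by Abel summation into the increments `g(1/(x+n+1)) - g(1/(x+n+2))`; the
boundary terms `n/(x+n+1)² · g(1/(x+n+1))` tend to `0` because `g` is bounded.
-/

open Filter Topology Set

theorem one_div_mem_Icc_of_one_le {a : ℝ} (ha : 1 ≤ a) : 1 / a ∈ Icc (0 : ℝ) 1 :=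
  ⟨by positivity, div_le_one_of_le₀ ha (by positivity)⟩

theorem summable_div_nat_add_one_sq (C : ℝ) : Summable fun n : ℕ => C / ((n : ℝ) + 1) ^ 2 := by
  have h : Summable fun n : ℕ => 1 / ((n : ℝ) + 1) ^ 2 := by
    simpa [abs_of_nonneg (by positivity : ∀ n : ℕ, (0 : ℝ) ≤ n + 1)] using
      (Real.summable_one_div_nat_add_rpow 1 2).2 one_lt_two
  exact (h.mul_left C).congr fun n => by ring

theorem summable_of_abs_le_div_sq {a : ℕ → ℝ} (C : ℝ) (h : ∀ n, |a n| ≤ C / ((n : ℝ) + 1) ^ 2) :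
    Summable a :=
  .of_norm_bounded (summable_div_nat_add_one_sq C) h

theorem tsum_sub_succ_eq_of_tendsto {b : ℕ → ℝ} {l : ℝ}
    (hs : Summable fun n => b n - b (n + 1)) (hb : Tendsto b atTop (𝓝 l)) :
    ∑' n, (b n - b (n + 1)) = b 0 - l := by
  refine tendsto_nhds_unique hs.hasSum.tendsto_sum_nat ?_
  simpa only [Finset.sum_range_sub'] using tendsto_const_nhds.sub hb

section TermwiseDifferentiation

variable {E : Type*} [NormedAddCommGroup E] [NormedSpace ℝ E]
  {f f' : ℕ → ℝ → E} {u : ℕ → ℝ} {s : Set ℝ}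

theorem norm_tsum_sub_tsum_le_of_hasDerivWithinAt (hs : Convex ℝ s) (hu : Summable u)
    (hf : ∀ n, ∀ y ∈ s, HasDerivWithinAt (f n) (f' n y) s y)
    (hf' : ∀ n, ∀ y ∈ s, ‖f' n y‖ ≤ u n) (hsum : ∀ y ∈ s, Summable fun n => f n y)
    {x y : ℝ} (hx : x ∈ s) (hy : y ∈ s) :
    ‖∑' n, f n y - ∑' n, f n x‖ ≤ (∑' n, u n) * ‖y - x‖ := by
  rw [← (hsum y hy).tsum_sub (hsum x hx)]
  exact tsum_of_norm_bounded (hu.hasSum.mul_right _)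
    fun n => hs.norm_image_sub_le_of_norm_hasDerivWithin_le (hf n) (hf' n) hx hy

/- Unlike in `hasDerivAt_tsum_of_isPreconnected`, `s` need not be open: it may contain its
endpoints. -/
theorem hasDerivWithinAt_tsum_of_convex [CompleteSpace E] (hs : Convex ℝ s) (hu : Summable u)
    (hf : ∀ n, ∀ y ∈ s, HasDerivWithinAt (f n) (f' n y) s y)
    (hf' : ∀ n, ∀ y ∈ s, ‖f' n y‖ ≤ u n) (hsum : ∀ y ∈ s, Summable fun n => f n y)
    {x : ℝ} (hx : x ∈ s) :
    HasDerivWithinAt (fun y => ∑' n, f n y) (∑' n, f' n x) s x := by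
  have hf'x : Summable fun n => f' n x := .of_norm_bounded hu fun n => hf' n x hx
  rw [hasDerivWithinAt_iff_isLittleO, Asymptotics.isLittleO_iff]
  intro ε hε
  obtain ⟨N, hN⟩ : ∃ N, ∑' n, u (n + N) < ε / 3 :=
    ((tendsto_sum_nat_add u).eventually (gt_mem_nhds (by positivity))).exists
  set T := ∑' n, u (n + N)
  have huN : Summable fun n => u (n + N) := (summable_nat_add_iff N).2 hu
  have hT : 0 ≤ T := tsum_nonneg fun n => (norm_nonneg _).trans (hf' (n + N) x hx)
  have htail : ∀ y ∈ s, ‖∑' n, f (n + N) y - ∑' n, f (n + N) x‖ ≤ T * ‖y - x‖ :=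
    fun y hy => norm_tsum_sub_tsum_le_of_hasDerivWithinAt hs huN (fun n => hf (n + N))
      (fun n => hf' (n + N)) (fun z hz => (summable_nat_add_iff N).2 (hsum z hz)) hx hy
  have htail' : ‖∑' n, f' (n + N) x‖ ≤ T :=
    tsum_of_norm_bounded huN.hasSum fun n => hf' (n + N) x hx
  have hhead : HasDerivWithinAt (fun y => ∑ n ∈ Finset.range N, f n y)
      (∑ n ∈ Finset.range N, f' n x) s x :=
    .fun_sum fun n _ => hf n x hx
  filter_upwards [(hasDerivWithinAt_iff_isLittleO.1 hhead).def (by positivity : 0 < ε / 3),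
    self_mem_nhdsWithin] with y hy_head hy
  rw [← (hsum y hy).sum_add_tsum_nat_add N, ← (hsum x hx).sum_add_tsum_nat_add N,
    ← hf'x.sum_add_tsum_nat_add N]
  calc _ = ‖(∑ n ∈ Finset.range N, f n y - ∑ n ∈ Finset.range N, f n x
          - (y - x) • ∑ n ∈ Finset.range N, f' n x)
        + (∑' n, f (n + N) y - ∑' n, f (n + N) x) - (y - x) • ∑' n, f' (n + N) x‖ := by
        congr 1; rw [smul_add]; abel
    _ ≤ ε / 3 * ‖y - x‖ + T * ‖y - x‖ + ‖y - x‖ * T := by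
        refine (norm_sub_le _ _).trans (add_le_add ((norm_add_le _ _).trans
          (add_le_add hy_head (htail y hy))) ?_)
        rw [norm_smul]
        exact mul_le_mul_of_nonneg_left htail' (norm_nonneg _)
    _ ≤ ε * ‖y - x‖ := by nlinarith [norm_nonneg (y - x)]

end TermwiseDifferentiation

namespace GaussMap

noncomputable section

/- `weight n` is the paper's `P_{n+1}`, and `invBranch n` is the inverse of the branch of the
Gauss map on which the first continued-fraction digit is `n + 1`. -/
def weight (n : ℕ) (y : ℝ) : ℝ := (y + 1) / ((y + (n + 1)) * (y + (n + 1) + 1))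

def weightDeriv (n : ℕ) (y : ℝ) : ℝ := n / (y + (n + 1)) ^ 2 - (n + 1) / (y + (n + 1) + 1) ^ 2

def invBranch (n : ℕ) (y : ℝ) : ℝ := 1 / (y + (n + 1))

def increment (g : ℝ → ℝ) (n : ℕ) (x : ℝ) : ℝ :=
  ((n : ℝ) + 1) / (x + (n + 1) + 1) ^ 2 * (g (1 / (x + (n + 1))) - g (1 / (x + (n + 1) + 1)))

theorem invBranch_mem_Icc (n : ℕ) {y : ℝ} (hy : 0 ≤ y) : invBranch n y ∈ Icc (0 : ℝ) 1 :=
  one_div_mem_Icc_of_one_le (by linarith [n.cast_nonneg (α := ℝ)])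

theorem hasDerivAt_invBranch (n : ℕ) {y : ℝ} (hy : -1 < y) :
    HasDerivAt (invBranch n) (-1 / (y + (n + 1)) ^ 2) y := by
  unfold invBranch
  have hn : (0 : ℝ) ≤ n := n.cast_nonneg
  have := ((hasDerivAt_id' y).add_const ((n : ℝ) + 1)).fun_inv (by linarith : 0 < y + (n + 1)).ne'
  simpa only [one_div, neg_div] using this

theorem hasDerivAt_weight (n : ℕ) {y : ℝ} (hy : -1 < y) :
    HasDerivAt (weight n) (weightDeriv n y) y := by
  unfold weight weightDeriv
  have hn : (0 : ℝ) ≤ n := n.cast_nonneg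
  have ha : y + (n + 1) ≠ 0 := by linarith
  have hb : y + (n + 1) + 1 ≠ 0 := by linarith
  have hden : HasDerivAt (fun z : ℝ => (z + (n + 1)) * (z + (n + 1) + 1))
      (1 * (y + (n + 1) + 1) + (y + (n + 1)) * 1) y :=
    ((hasDerivAt_id' y).add_const _).mul (((hasDerivAt_id' y).add_const _).add_const 1)
  refine (((hasDerivAt_id' y).add_const 1).fun_div hden (mul_ne_zero ha hb)).congr_deriv ?_
  field_simp
  ring

section Bounds

variable (n : ℕ) {y : ℝ} (hy0 : 0 ≤ y) (hy1 : y ≤ 1)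
include hy0 hy1

theorem weight_le : weight n y ≤ 2 / ((n : ℝ) + 1) ^ 2 := by
  have hn : (0 : ℝ) ≤ n := n.cast_nonneg
  apply div_le_div₀ (by norm_num) (by linarith) (by positivity)
  nlinarith

theorem abs_weight_div_sq_le : |weight n y / (y + (n + 1)) ^ 2| ≤ 2 / ((n : ℝ) + 1) ^ 2 := by
  have hn : (0 : ℝ) ≤ n := n.cast_nonneg
  rw [abs_of_nonneg (by unfold weight; positivity)]
  exact (div_le_self (by unfold weight; positivity) (by nlinarith)).trans (weight_le n hy0 hy1)

theorem abs_weightDeriv_le : |weightDeriv n y| ≤ 1 / ((n : ℝ) + 1) ^ 2 := by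
  have hn : (0 : ℝ) ≤ n := n.cast_nonneg
  have ha : (n : ℝ) + 1 ≤ y + (n + 1) := by linarith
  have hb : (n : ℝ) + 2 ≤ y + (n + 1) + 1 := by linarith
  have hrw : weightDeriv n y = ((n : ℝ) ^ 2 + n - 1 - y ^ 2 - 2 * y)
      / ((y + (n + 1)) ^ 2 * (y + (n + 1) + 1) ^ 2) := by
    unfold weightDeriv
    field_simp
    ring
  have hnum : |(n : ℝ) ^ 2 + n - 1 - y ^ 2 - 2 * y| ≤ ((n : ℝ) + 2) ^ 2 := by
    rw [abs_le]; constructor <;> nlinarith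
  rw [hrw, abs_div,
    abs_of_pos (by positivity : (0 : ℝ) < (y + (n + 1)) ^ 2 * (y + (n + 1) + 1) ^ 2)]
  calc _ ≤ ((n : ℝ) + 2) ^ 2 / (((n : ℝ) + 1) ^ 2 * ((n : ℝ) + 2) ^ 2) := by gcongr
    _ = 1 / ((n : ℝ) + 1) ^ 2 := by field_simp

end Bounds

section Series

variable {g g' : ℝ → ℝ} {M M' x : ℝ}

theorem hasDerivWithinAt_weight_mul_comp_invBranch
    (hg : ∀ z ∈ Icc (0 : ℝ) 1, HasDerivWithinAt g (g' z) (Icc 0 1) z) (n : ℕ) {y : ℝ}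
    (hy : y ∈ Icc (0 : ℝ) 1) :
    HasDerivWithinAt (fun y => weight n y * g (invBranch n y))
      (weightDeriv n y * g (invBranch n y) - weight n y / (y + (n + 1)) ^ 2 * g' (invBranch n y))
      (Icc 0 1) y := by
  have hy' : -1 < y := by linarith [hy.1]
  have hgq : HasDerivWithinAt (fun y => g (invBranch n y))
      (g' (invBranch n y) * (-1 / (y + (n + 1)) ^ 2)) (Icc 0 1) y :=
    (hg _ (invBranch_mem_Icc n hy.1)).comp y (hasDerivAt_invBranch n hy').hasDerivWithinAt
      fun z hz => invBranch_mem_Icc n hz.1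
  refine ((hasDerivAt_weight n hy').hasDerivWithinAt.mul hgq).congr_deriv ?_
  ring

theorem abs_weight_mul_le (hM : ∀ z ∈ Icc (0 : ℝ) 1, |g z| ≤ M) (n : ℕ) {y : ℝ}
    (hy : y ∈ Icc (0 : ℝ) 1) :
    |weight n y * g (invBranch n y)| ≤ 2 * M / ((n : ℝ) + 1) ^ 2 := by
  have hw : 0 ≤ weight n y := by have := hy.1; unfold weight; positivity
  rw [abs_mul, abs_of_nonneg hw, mul_div_right_comm]
  exact mul_le_mul (weight_le n hy.1 hy.2) (hM _ (invBranch_mem_Icc n hy.1)) (abs_nonneg _)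
    (by positivity)

theorem abs_weightDeriv_mul_le (hM : ∀ z ∈ Icc (0 : ℝ) 1, |g z| ≤ M) (n : ℕ) {y : ℝ}
    (hy : y ∈ Icc (0 : ℝ) 1) :
    |weightDeriv n y * g (invBranch n y)| ≤ M / ((n : ℝ) + 1) ^ 2 := by
  rw [abs_mul, ← one_div_mul_eq_div]
  exact mul_le_mul (abs_weightDeriv_le n hy.1 hy.2) (hM _ (invBranch_mem_Icc n hy.1))
    (abs_nonneg _) (by positivity)

theorem abs_weight_div_sq_mul_le (hM' : ∀ z ∈ Icc (0 : ℝ) 1, |g' z| ≤ M') (n : ℕ) {y : ℝ}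
    (hy : y ∈ Icc (0 : ℝ) 1) :
    |weight n y / (y + (n + 1)) ^ 2 * g' (invBranch n y)| ≤ 2 * M' / ((n : ℝ) + 1) ^ 2 := by
  rw [abs_mul, mul_div_right_comm]
  exact mul_le_mul (abs_weight_div_sq_le n hy.1 hy.2) (hM' _ (invBranch_mem_Icc n hy.1))
    (abs_nonneg _) (by positivity)

theorem abs_weightDeriv_mul_sub_le (hM : ∀ z ∈ Icc (0 : ℝ) 1, |g z| ≤ M)
    (hM' : ∀ z ∈ Icc (0 : ℝ) 1, |g' z| ≤ M') (n : ℕ) {y : ℝ} (hy : y ∈ Icc (0 : ℝ) 1) :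
    |weightDeriv n y * g (invBranch n y) - weight n y / (y + (n + 1)) ^ 2 * g' (invBranch n y)|
      ≤ (M + 2 * M') / ((n : ℝ) + 1) ^ 2 := by
  rw [add_div]
  exact (abs_sub _ _).trans
    (add_le_add (abs_weightDeriv_mul_le hM n hy) (abs_weight_div_sq_mul_le hM' n hy))

theorem summable_increment (hg : ∀ z ∈ Icc (0 : ℝ) 1, HasDerivWithinAt g (g' z) (Icc 0 1) z)
    (hM' : ∀ z ∈ Icc (0 : ℝ) 1, |g' z| ≤ M') (hx : x ∈ Icc (0 : ℝ) 1) :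
    Summable fun n => increment g n x := by
  refine summable_of_abs_le_div_sq M' fun n => ?_
  have hx0 : 0 ≤ x := hx.1
  have hn : (0 : ℝ) ≤ n := n.cast_nonneg
  have hM'0 : 0 ≤ M' := (abs_nonneg _).trans (hM' 0 ⟨le_rfl, zero_le_one⟩)
  have hfac : |((n : ℝ) + 1) / (x + (n + 1) + 1) ^ 2| ≤ 1 := by
    rw [abs_of_nonneg (by positivity), div_le_one (by positivity)]
    nlinarith
  have hstep : |1 / (x + (n + 1)) - 1 / (x + (n + 1) + 1)| ≤ 1 / ((n : ℝ) + 1) ^ 2 := by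
    have hsub : 1 / (x + (n + 1)) - 1 / (x + (n + 1) + 1)
        = 1 / ((x + (n + 1)) * (x + (n + 1) + 1)) := by
      field_simp; ring
    rw [hsub, abs_of_nonneg (by positivity)]
    gcongr
    nlinarith
  have hlip : |g (1 / (x + (n + 1))) - g (1 / (x + (n + 1) + 1))|
      ≤ M' * (1 / ((n : ℝ) + 1) ^ 2) :=
    ((convex_Icc (0 : ℝ) 1).norm_image_sub_le_of_norm_hasDerivWithin_le hg hM'
      (one_div_mem_Icc_of_one_le (by linarith)) (one_div_mem_Icc_of_one_le (by linarith))).trans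
      (mul_le_mul_of_nonneg_left hstep hM'0)
  calc |increment g n x| = |((n : ℝ) + 1) / (x + (n + 1) + 1) ^ 2|
        * |g (1 / (x + (n + 1))) - g (1 / (x + (n + 1) + 1))| := abs_mul _ _
    _ ≤ 1 * (M' * (1 / ((n : ℝ) + 1) ^ 2)) := mul_le_mul hfac hlip (abs_nonneg _) zero_le_one
    _ = M' / ((n : ℝ) + 1) ^ 2 := by ring

theorem tsum_weightDeriv_mul_eq_neg_tsum_increment (hM : ∀ z ∈ Icc (0 : ℝ) 1, |g z| ≤ M)
    (hx : x ∈ Icc (0 : ℝ) 1) (hR : Summable fun n => increment g n x) :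
    ∑' n, weightDeriv n x * g (invBranch n x) = -∑' n, increment g n x := by
  have hx0 : 0 ≤ x := hx.1
  set b : ℕ → ℝ := fun n => n / (x + (n + 1)) ^ 2 * g (invBranch n x)
  have hL : Summable fun n => weightDeriv n x * g (invBranch n x) :=
    summable_of_abs_le_div_sq M fun n => abs_weightDeriv_mul_le hM n hx
  have hLR : ∀ n, weightDeriv n x * g (invBranch n x) + increment g n x = b n - b (n + 1) := by
    intro n
    simp only [b, weightDeriv, invBranch, increment]
    push_cast
    ring_nf
  have hb : Tendsto b atTop (𝓝 0) := by
    refine squeeze_zero_norm (fun n => ?_)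
      (by simpa only [mul_zero] using tendsto_one_div_add_atTop_nhds_zero_nat.const_mul M)
    have hn : (0 : ℝ) ≤ n := n.cast_nonneg
    have hfac : |(n : ℝ) / (x + (n + 1)) ^ 2| ≤ 1 / ((n : ℝ) + 1) := by
      rw [abs_of_nonneg (by positivity), div_le_div_iff₀ (by positivity) (by positivity)]
      nlinarith
    calc ‖b n‖ = |(n : ℝ) / (x + (n + 1)) ^ 2| * |g (invBranch n x)| := abs_mul _ _
      _ ≤ 1 / ((n : ℝ) + 1) * M :=
        mul_le_mul hfac (hM _ (invBranch_mem_Icc n hx0)) (abs_nonneg _) (by positivity)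
      _ = M * (1 / ((n : ℝ) + 1)) := mul_comm _ _
  have htel := tsum_sub_succ_eq_of_tendsto ((hL.add hR).congr hLR) hb
  rw [← tsum_congr hLR, hL.tsum_add hR] at htel
  simp only [b, CharP.cast_eq_zero, zero_div, zero_mul, sub_zero] at htel
  linarith

end Series

end

end GaussMap

open GaussMap

theorem deriv_perron_frobenius (g : ℝ → ℝ)
    (hg : ContDiffOn ℝ 1 g (Set.Icc 0 1)) :
    ∀ x ∈ Set.Icc (0:ℝ) 1,
      HasDerivWithinAt
        (fun y : ℝ => ∑' i : ℕ,
          (y + 1) / ((y + (i + 1)) * (y + (i + 1) + 1)) * g (1 / (y + (i + 1))))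
        (-(∑' i : ℕ, ((i : ℝ) + 1) / (x + (i + 1) + 1) ^ 2 *
            (g (1 / (x + (i + 1))) - g (1 / (x + (i + 1) + 1))))
         - ∑' i : ℕ, ((x + 1) / ((x + (i + 1)) * (x + (i + 1) + 1)) / (x + (i + 1)) ^ 2) *
            derivWithin g (Set.Icc 0 1) (1 / (x + (i + 1))))
        (Set.Icc 0 1) x := by
  intro x hx
  set g' := derivWithin g (Set.Icc 0 1)
  have hg' : ∀ z ∈ Set.Icc (0 : ℝ) 1, HasDerivWithinAt g (g' z) (Set.Icc 0 1) z :=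
    fun z hz => (hg.differentiableOn one_ne_zero z hz).hasDerivWithinAt
  obtain ⟨M, hM⟩ := isCompact_Icc.exists_bound_of_continuousOn hg.continuousOn
  obtain ⟨M', hM'⟩ := isCompact_Icc.exists_bound_of_continuousOn
    (hg.continuousOn_derivWithin (uniqueDiffOn_Icc zero_lt_one) le_rfl)
  have hderiv := hasDerivWithinAt_tsum_of_convex (convex_Icc 0 1)
    (summable_div_nat_add_one_sq (M + 2 * M'))
    (fun n y hy => hasDerivWithinAt_weight_mul_comp_invBranch hg' n hy)
    (fun n y hy => abs_weightDeriv_mul_sub_le hM hM' n hy)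
    (fun y hy => summable_of_abs_le_div_sq (2 * M) fun n => abs_weight_mul_le hM n hy) hx
  refine hderiv.congr_deriv ?_
  rw [(summable_of_abs_le_div_sq M fun n => abs_weightDeriv_mul_le hM n hx).tsum_sub
      (summable_of_abs_le_div_sq (2 * M') fun n => abs_weight_div_sq_mul_le hM' n hx),
    tsum_weightDeriv_mul_eq_neg_tsum_increment hM hx (summable_increment hg' hM' hx)]
  rfl
end
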